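/- arXiv:1704.04625 — 4 statements merged into one kernel-verified Lean document; each statement's English description precedes it below -/
import Mathlib

section
/- If {a_n}, {b_n}, {c_n} are sequences of nonnegative real numbers satisfying a_{n+1} ≤ (1 + b_n) a_n + c_n for all n, and the series ∑ b_n and ∑ c_n converge, then the limit of a_n exists (i.e., {a_n} converges). -/
/-!
Dividing by the partial products `P n = ∏_{k<n} (1 + b k)` turns the recursion into
`a (n+1) / P (n+1) ≤ a n / P n + c n`. Subtracting the partial sums of `c` then gives a
bounded-below antitone sequence, so `a n / P n` converges; and `P n` converges because
`∏ (1 + b k)` is multipliable when `∑ b k` is summable.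
-/

open Filter Finset Topology

theorem exists_tendsto_of_le_add_of_summable {u c : ℕ → ℝ} (hu : BddBelow (Set.range u))
    (hstep : ∀ n, u (n + 1) ≤ u n + c n) (hc : Summable c) :
    ∃ l, Tendsto u atTop (𝓝 l) := by
  set S : ℕ → ℝ := fun n => ∑ k ∈ range n, c k
  have hS : Tendsto S atTop (𝓝 (∑' k, c k)) := hc.hasSum.tendsto_sum_nat
  have hanti : Antitone (u - S) := antitone_nat_of_succ_le fun n => by
    simp only [Pi.sub_apply, S, sum_range_succ]
    linarith [hstep n]
  have hbdd : BddBelow (Set.range (u - S)) := by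
    obtain ⟨m, hm⟩ := hu
    obtain ⟨M, hM⟩ := hS.bddAbove_range
    refine ⟨m - M, ?_⟩
    rintro _ ⟨n, rfl⟩
    have hun := hm ⟨n, rfl⟩
    have hSn := hM ⟨n, rfl⟩
    simp only [Pi.sub_apply]
    linarith
  exact ⟨_, by simpa using (tendsto_atTop_ciInf hanti hbdd).add hS⟩

theorem div_mul_one_add_le_div_add {x x' p β γ : ℝ} (hx' : x' ≤ (1 + β) * x + γ)
    (hp : 1 ≤ p) (hβ : 0 ≤ β) (hγ : 0 ≤ γ) :
    x' / (p * (1 + β)) ≤ x / p + γ := by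
  have hpβ : 1 ≤ p * (1 + β) := by nlinarith
  rw [div_le_iff₀ (by linarith)]
  calc x' ≤ (1 + β) * x + γ := hx'
    _ ≤ (1 + β) * x + γ * (p * (1 + β)) := by nlinarith
    _ = (x / p + γ) * (p * (1 + β)) := by field_simp

theorem stmt_0 (a b c : ℕ → ℝ)
    (ha : ∀ n, 0 ≤ a n) (hb : ∀ n, 0 ≤ b n) (hc : ∀ n, 0 ≤ c n)
    (hrec : ∀ n, a (n + 1) ≤ (1 + b n) * a n + c n)
    (hbs : Summable b) (hcs : Summable c) :
    ∃ l : ℝ, Filter.Tendsto a Filter.atTop (nhds l) := by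
  set P : ℕ → ℝ := fun n => ∏ k ∈ range n, (1 + b k)
  have hP : ∀ n, 1 ≤ P n := fun n => one_le_prod fun k _ => by linarith [hb k]
  have hPlim : Tendsto P atTop (𝓝 (∏' k, (1 + b k))) :=
    (Real.multipliable_one_add_of_summable hbs).hasProd.tendsto_prod_nat
  obtain ⟨l, hl⟩ := exists_tendsto_of_le_add_of_summable (u := fun n => a n / P n)
    ⟨0, by rintro _ ⟨n, rfl⟩; exact div_nonneg (ha n) (by linarith [hP n])⟩
    (fun n => by
      simpa only [P, prod_range_succ] using
        div_mul_one_add_le_div_add (hrec n) (hP n) (hb n) (hc n))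
    hcs
  exact ⟨_, (hl.mul hPlim).congr fun n => div_mul_cancel₀ _ (by linarith [hP n])⟩
end

section
/- Under the hypotheses of the iteration scheme: K closed convex nonempty subset of a Banach space E with nonexpansive retraction P, T₁, T₂ : K → E nonself total asymptotically nonexpansive with summable sequences ∑ μ_n < ∞, ∑ λ_n < ∞, φ(κ) ≤ M*κ for κ ≥ M, and F = F(T₁) ∩ F(T₂) nonempty; if x_{n+1} = (1−α_n)(PT₁)^n y_n + α_n(PT₂)^n y_n and y_n = (1−β_n)x_n + β_n(PT₁)^n x_n with α_n, β_n ∈ [0,1], then for every p ∈ F the limit lim ‖x_n − p‖ exists. -/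
open Filter

lemma conv_of_quasi (a d : ℕ → ℝ) (ha : ∀ n, 0 ≤ a n) (hd : ∀ n, 0 ≤ d n)
    (hds : Summable d) (hrec : ∀ n, a (n + 1) ≤ a n + d n) :
    ∃ l, Tendsto a atTop (nhds l) := by
  set S : ℕ → ℝ := fun n => ∑ k ∈ Finset.range n, d k with hS
  have hu : Antitone fun n => a n - S n := by
    apply antitone_nat_of_succ_le
    intro n
    have h1 := hrec n
    have h2 : S (n + 1) = S n + d n := by simp [hS, Finset.sum_range_succ]
    simp only [h2]; linarith
  have hbd : BddBelow (Set.range fun n => a n - S n) := by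
    refine ⟨-∑' k, d k, ?_⟩
    rintro _ ⟨n, rfl⟩
    have h1 : S n ≤ ∑' k, d k := Summable.sum_le_tsum _ (fun i _ => hd i) hds
    have := ha n
    simp only
    linarith
  have hl := tendsto_atTop_ciInf hu hbd
  have hSt : Tendsto S atTop (nhds (∑' k, d k)) := hds.hasSum.tendsto_sum_nat
  refine ⟨(⨅ i, a i - S i) + ∑' k, d k, ?_⟩
  have h := hl.add hSt
  have heq : (fun n => (a n - S n) + S n) = a := by funext n; ring
  rwa [heq] at h

lemma conv_of_quasi' (a b c : ℕ → ℝ) (ha : ∀ n, 0 ≤ a n) (hb : ∀ n, 0 ≤ b n)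
    (hc : ∀ n, 0 ≤ c n) (hbs : Summable b) (hcs : Summable c)
    (hrec : ∀ n, a (n + 1) ≤ (1 + c n) * a n + b n) :
    ∃ l, Tendsto a atTop (nhds l) := by
  have htb : 0 ≤ ∑' k, b k := tsum_nonneg hb
  set B : ℝ := (a 0 + ∑' k, b k) * Real.exp (∑' k, c k) with hBdef
  have key : ∀ n, a n ≤ (a 0 + ∑ k ∈ Finset.range n, b k) *
      Real.exp (∑ k ∈ Finset.range n, c k) := by
    intro n
    induction n with
    | zero => simp
    | succ n ih =>
      have h1 := hrec n
      have h2 : 1 + c n ≤ Real.exp (c n) := by linarith [Real.add_one_le_exp (c n)]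
      have hpos : (0:ℝ) < Real.exp (∑ k ∈ Finset.range n, c k) := Real.exp_pos _
      have hnn : 0 ≤ a 0 + ∑ k ∈ Finset.range n, b k := by
        have : 0 ≤ ∑ k ∈ Finset.range n, b k := Finset.sum_nonneg fun i _ => hb i
        linarith [ha 0]
      have h3 : (1 + c n) * a n ≤ Real.exp (c n) *
          ((a 0 + ∑ k ∈ Finset.range n, b k) * Real.exp (∑ k ∈ Finset.range n, c k)) := by
        calc (1 + c n) * a n ≤ Real.exp (c n) * a n := by
              apply mul_le_mul_of_nonneg_right _ (ha n)
              linarith [Real.add_one_le_exp (c n)]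
          _ ≤ _ := by
              apply mul_le_mul_of_nonneg_left ih (Real.exp_nonneg _)
      have h4 : Real.exp (c n) * Real.exp (∑ k ∈ Finset.range n, c k)
          = Real.exp (∑ k ∈ Finset.range (n+1), c k) := by
        rw [← Real.exp_add, Finset.sum_range_succ]; ring_nf
      have h5 : (1:ℝ) ≤ Real.exp (∑ k ∈ Finset.range (n+1), c k) :=
        Real.one_le_exp (Finset.sum_nonneg fun i _ => hc i)
      calc a (n+1) ≤ (1 + c n) * a n + b n := h1
        _ ≤ (a 0 + ∑ k ∈ Finset.range n, b k) * Real.exp (∑ k ∈ Finset.range (n+1), c k)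
            + b n := by nlinarith
        _ ≤ _ := by
            rw [Finset.sum_range_succ (f := b)]
            have := hb n
            nlinarith
  have hbound : ∀ n, a n ≤ B := by
    intro n
    refine (key n).trans ?_
    have h1 : ∑ k ∈ Finset.range n, b k ≤ ∑' k, b k := Summable.sum_le_tsum _ (fun i _ => hb i) hbs
    have h2 : ∑ k ∈ Finset.range n, c k ≤ ∑' k, c k := Summable.sum_le_tsum _ (fun i _ => hc i) hcs
    have hnn : 0 ≤ a 0 + ∑ k ∈ Finset.range n, b k := by
      have : 0 ≤ ∑ k ∈ Finset.range n, b k := Finset.sum_nonneg fun i _ => hb i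
      linarith [ha 0]
    have := Real.exp_le_exp.mpr h2
    nlinarith [Real.exp_pos (∑ k ∈ Finset.range n, c k)]
  have hBnn : 0 ≤ B := (ha 0).trans (hbound 0)
  apply conv_of_quasi a (fun n => c n * B + b n) ha
  · intro n
    have : 0 ≤ c n * B := mul_nonneg (hc n) hBnn
    linarith [hb n]
  · exact (hcs.mul_right B).add hbs
  · intro n
    have := hrec n
    have h1 : c n * a n ≤ c n * B := mul_le_mul_of_nonneg_left (hbound n) (hc n)
    nlinarith

theorem stmt_8 {E : Type*} [NormedAddCommGroup E] [NormedSpace ℝ E] [CompleteSpace E]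
    (K : Set E) (hKne : K.Nonempty) (hKclosed : IsClosed K) (hKconvex : Convex ℝ K)
    (P T₁ T₂ : E → E)
    (hPrange : ∀ x, P x ∈ K)
    (hPnonexp : ∀ x y, ‖P x - P y‖ ≤ ‖x - y‖)
    (hPretr : ∀ x ∈ K, P x = x)
    (μ lam : ℕ → ℝ)
    (hμ : ∀ n, 0 ≤ μ n) (hlam : ∀ n, 0 ≤ lam n)
    (hμs : Summable μ) (hlams : Summable lam)
    (φ : ℝ → ℝ) (hφmono : StrictMonoOn φ (Set.Ici (0 : ℝ)))
    (hφcont : ContinuousOn φ (Set.Ici (0 : ℝ))) (hφ0 : φ 0 = 0)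
    (M Mstar : ℝ) (hM : 0 < M) (hMstar : 0 < Mstar)
    (hgrowth : ∀ κ ≥ M, φ κ ≤ Mstar * κ)
    (hT₁ : ∀ x ∈ K, ∀ y ∈ K, ∀ n ≥ 1,
      ‖(P ∘ T₁)^[n] x - (P ∘ T₁)^[n] y‖ ≤ ‖x - y‖ + μ n * φ ‖x - y‖ + lam n)
    (hT₂ : ∀ x ∈ K, ∀ y ∈ K, ∀ n ≥ 1,
      ‖(P ∘ T₂)^[n] x - (P ∘ T₂)^[n] y‖ ≤ ‖x - y‖ + μ n * φ ‖x - y‖ + lam n)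
    (F : Set E) (hF : F = {x ∈ K | T₁ x = x ∧ T₂ x = x}) (hFne : F.Nonempty)
    (α β : ℕ → ℝ) (hα : ∀ n, α n ∈ Set.Icc (0 : ℝ) 1) (hβ : ∀ n, β n ∈ Set.Icc (0 : ℝ) 1)
    (x y : ℕ → E) (hx1 : x 1 ∈ K) (hxK : ∀ n, x n ∈ K)
    (hy : ∀ n ≥ 1, y n = (1 - β n) • x n + β n • (P ∘ T₁)^[n] (x n))
    (hx : ∀ n ≥ 1, x (n + 1) = (1 - α n) • (P ∘ T₁)^[n] (y n) + α n • (P ∘ T₂)^[n] (y n)) :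
    ∀ p ∈ F, ∃ l : ℝ, Filter.Tendsto (fun n => ‖x n - p‖) Filter.atTop (nhds l) := by
  intro p hp
  rw [hF] at hp
  obtain ⟨hpK, hT1p, hT2p⟩ := hp
  -- fixed points of iterates
  have hfix : ∀ (T : E → E), T p = p → ∀ n, (P ∘ T)^[n] p = p := by
    intro T hTp n
    induction n with
    | zero => simp
    | succ n ih => rw [Function.iterate_succ_apply', ih]; simp [hTp, hPretr p hpK]
  have hfix₁ := hfix T₁ hT1p
  have hfix₂ := hfix T₂ hT2p
  -- iterates land in K
  have hiterK : ∀ (T : E → E) (z : E) (n : ℕ), 1 ≤ n → (P ∘ T)^[n] z ∈ K := by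
    intro T z n hn
    obtain ⟨m, rfl⟩ := Nat.exists_eq_add_of_le hn
    rw [add_comm, Function.iterate_succ_apply']
    exact hPrange _
  -- y n ∈ K
  have hyK : ∀ n, 1 ≤ n → y n ∈ K := by
    intro n hn
    rw [hy n hn]
    exact hKconvex (hxK n) (hiterK T₁ (x n) n hn) (by linarith [(hβ n).2]) (hβ n).1
      (by ring)
  -- φ facts
  have hφmono' : MonotoneOn φ (Set.Ici (0 : ℝ)) := hφmono.monotoneOn
  have hφnn : ∀ t, 0 ≤ t → 0 ≤ φ t := by
    intro t ht
    have := hφmono' (Set.mem_Ici.mpr le_rfl) (Set.mem_Ici.mpr ht) ht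
    rwa [hφ0] at this
  have hφMnn : 0 ≤ φ M := hφnn M hM.le
  have hφle : ∀ t, 0 ≤ t → φ t ≤ φ M + Mstar * t := by
    intro t ht
    rcases le_or_gt t M with h | h
    · have h1 : φ t ≤ φ M := hφmono' (Set.mem_Ici.mpr ht) (Set.mem_Ici.mpr hM.le) h
      nlinarith
    · have h1 := hgrowth t h.le
      linarith
  -- key norm estimates
  have hy_est : ∀ n, 1 ≤ n → ‖y n - p‖ ≤ ‖x n - p‖ + μ n * φ ‖x n - p‖ + lam n := by
    intro n hn
    have hsplit : y n - p = (1 - β n) • (x n - p) + β n • ((P ∘ T₁)^[n] (x n) - p) := by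
      rw [hy n hn]; module
    have h1 : ‖y n - p‖ ≤ (1 - β n) * ‖x n - p‖ + β n * ‖(P ∘ T₁)^[n] (x n) - p‖ := by
      rw [hsplit]
      refine (norm_add_le _ _).trans ?_
      rw [norm_smul, norm_smul, Real.norm_eq_abs, Real.norm_eq_abs,
        abs_of_nonneg (by linarith [(hβ n).2]), abs_of_nonneg (hβ n).1]
    have h2 : ‖(P ∘ T₁)^[n] (x n) - p‖ ≤ ‖x n - p‖ + μ n * φ ‖x n - p‖ + lam n := by
      have := hT₁ (x n) (hxK n) p hpK n hn
      rwa [hfix₁ n] at this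
    have h3 : 0 ≤ μ n * φ ‖x n - p‖ + lam n :=
      add_nonneg (mul_nonneg (hμ n) (hφnn _ (norm_nonneg _))) (hlam n)
    nlinarith [(hβ n).1, (hβ n).2, norm_nonneg (x n - p)]
  have hx_est : ∀ n, 1 ≤ n →
      ‖x (n + 1) - p‖ ≤ ‖y n - p‖ + μ n * φ ‖y n - p‖ + lam n := by
    intro n hn
    have hsplit : x (n + 1) - p =
        (1 - α n) • ((P ∘ T₁)^[n] (y n) - p) + α n • ((P ∘ T₂)^[n] (y n) - p) := by
      rw [hx n hn]; module
    have h1 : ‖x (n + 1) - p‖ ≤ (1 - α n) * ‖(P ∘ T₁)^[n] (y n) - p‖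
        + α n * ‖(P ∘ T₂)^[n] (y n) - p‖ := by
      rw [hsplit]
      refine (norm_add_le _ _).trans ?_
      rw [norm_smul, norm_smul, Real.norm_eq_abs, Real.norm_eq_abs,
        abs_of_nonneg (by linarith [(hα n).2]), abs_of_nonneg (hα n).1]
    have h2 : ‖(P ∘ T₁)^[n] (y n) - p‖ ≤ ‖y n - p‖ + μ n * φ ‖y n - p‖ + lam n := by
      have := hT₁ (y n) (hyK n hn) p hpK n hn
      rwa [hfix₁ n] at this
    have h3 : ‖(P ∘ T₂)^[n] (y n) - p‖ ≤ ‖y n - p‖ + μ n * φ ‖y n - p‖ + lam n := by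
      have := hT₂ (y n) (hyK n hn) p hpK n hn
      rwa [hfix₂ n] at this
    nlinarith [(hα n).1, (hα n).2]
  -- assemble recurrence
  set c : ℕ → ℝ := fun n => 2 * Mstar * μ n + (Mstar * μ n) ^ 2 with hc
  set b : ℕ → ℝ := fun n => (2 + Mstar * μ n) * (μ n * φ M + lam n) with hb
  have hcnn : ∀ n, 0 ≤ c n := fun n => by
    have := hμ n; positivity
  have hbnn : ∀ n, 0 ≤ b n := fun n => by
    have h1 := hμ n; have h2 := hlam n
    simp only [hb]
    positivity
  have key : ∀ n, 1 ≤ n → ‖x (n + 1) - p‖ ≤ (1 + c n) * ‖x n - p‖ + b n := by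
    intro n hn
    have h1 := hy_est n hn
    have h2 := hx_est n hn
    have h3 := hφle ‖x n - p‖ (norm_nonneg _)
    have h4 := hφle ‖y n - p‖ (norm_nonneg _)
    have h5 : μ n * φ ‖x n - p‖ ≤ μ n * (φ M + Mstar * ‖x n - p‖) :=
      mul_le_mul_of_nonneg_left h3 (hμ n)
    have h6 : μ n * φ ‖y n - p‖ ≤ μ n * (φ M + Mstar * ‖y n - p‖) :=
      mul_le_mul_of_nonneg_left h4 (hμ n)
    have hyd : ‖y n - p‖ ≤ (1 + Mstar * μ n) * ‖x n - p‖ + μ n * φ M + lam n := by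
      nlinarith
    have h7 : Mstar * μ n * ‖y n - p‖ ≤
        Mstar * μ n * ((1 + Mstar * μ n) * ‖x n - p‖ + μ n * φ M + lam n) :=
      mul_le_mul_of_nonneg_left hyd (mul_nonneg hMstar.le (hμ n))
    simp only [hc, hb]
    nlinarith [hμ n, hlam n, norm_nonneg (y n - p), norm_nonneg (x n - p)]
  -- summability
  have hμbdd : ∀ n, μ n ≤ ∑' k, μ k := fun n => Summable.le_tsum hμs n (fun i _ => hμ i)
  have htμnn : 0 ≤ ∑' k, μ k := tsum_nonneg hμ
  have hcs : Summable c := by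
    apply Summable.add (hμs.mul_left _)
    have : ∀ n, (Mstar * μ n) ^ 2 ≤ (Mstar ^ 2 * (∑' k, μ k)) * μ n := by
      intro n
      have h2 := hμ n
      nlinarith [mul_le_mul_of_nonneg_left (hμbdd n)
        (mul_nonneg (mul_nonneg hMstar.le hMstar.le) (hμ n))]
    exact Summable.of_nonneg_of_le (fun n => by positivity) this (hμs.mul_left _)
  have hbs : Summable b := by
    have h1 : Summable (fun n => μ n * φ M + lam n) := (hμs.mul_right _).add hlams
    have : ∀ n, b n ≤ (2 + Mstar * ∑' k, μ k) * (μ n * φ M + lam n) := by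
      intro n
      have h2 := hμ n
      have h3 := hlam n
      have h4 := hμbdd n
      have h5 : 0 ≤ μ n * φ M + lam n := by positivity
      have h6 : 2 + Mstar * μ n ≤ 2 + Mstar * ∑' k, μ k := by nlinarith
      simp only [hb]
      exact mul_le_mul_of_nonneg_right h6 h5
    exact Summable.of_nonneg_of_le hbnn this (h1.mul_left _)
  -- shift and conclude
  obtain ⟨l, hl⟩ := conv_of_quasi' (fun n => ‖x (n + 1) - p‖) (fun n => b (n + 1))
    (fun n => c (n + 1)) (fun n => norm_nonneg _) (fun n => hbnn _) (fun n => hcnn _)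
    ((summable_nat_add_iff 1).mpr hbs) ((summable_nat_add_iff 1).mpr hcs)
    (fun n => key (n + 1) (Nat.le_add_left 1 n))
  exact ⟨l, (Filter.tendsto_add_atTop_iff_nat 1).mp hl⟩
end

section
/- Under the iteration hypotheses (T₁, T₂ continuous nonself total asymptotically nonexpansive with ∑μ_n < ∞, ∑λ_n < ∞, φ(κ) ≤ M*κ for κ ≥ M, F ≠ ∅, K closed convex in a Banach space E), the sequence {x_n} generated by x_{n+1} = (1−α_n)(PT₁)^n y_n + α_n(PT₂)^n y_n, y_n = (1−β_n)x_n + β_n(PT₁)^n x_n converges strongly to a common fixed point of T₁ and T₂ if and only if liminf d(x_n, F) = 0. -/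
/-!
For every common fixed point `p`, the total asymptotic nonexpansiveness and the linear growth
of `φ` give `‖x (n + 1) - p‖ ≤ (1 + c n) ‖x n - p‖ + e n` with summable `c, e ≥ 0`; passing to the
infimum over `p`, the same recursion holds for `d n = d(x n, F)`. Unrolling it yields
`d m ≤ C (d n + ∑_{k ≥ n} e k)` for `m ≥ n`, so `liminf d = 0` forces `d → 0`, and the analogous
bound for `‖x m - p‖` with `p` nearly closest to `x n` makes `x` Cauchy. Its limit lies in the
closed set `F` because `d` vanishes there.
-/

open Filter Metric Topology

section AlmostDecreasing

variable {s c e : ℕ → ℝ} {a : ℕ}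

theorem le_exp_sum_mul_of_le_one_add_mul_add (hc : ∀ n, 0 ≤ c n) (he : ∀ n, 0 ≤ e n)
    (hrec : ∀ n ≥ a, s (n + 1) ≤ (1 + c n) * s n + e n) {n : ℕ} (hn : a ≤ n) (hsn : 0 ≤ s n)
    (j : ℕ) :
    s (n + j) ≤ Real.exp (∑ k ∈ Finset.range j, c (k + n)) *
      (s n + ∑ k ∈ Finset.range j, e (k + n)) := by
  induction j with
  | zero => simp
  | succ j ih =>
    set E := Real.exp (∑ k ∈ Finset.range j, c (k + n))
    set A := s n + ∑ k ∈ Finset.range j, e (k + n)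
    have hE : 1 ≤ E := Real.one_le_exp (Finset.sum_nonneg fun k _ => hc _)
    have hA : 0 ≤ A := add_nonneg hsn (Finset.sum_nonneg fun k _ => he _)
    have hexp : 1 + c (j + n) ≤ Real.exp (c (j + n)) := by
      linarith [Real.add_one_le_exp (c (j + n))]
    have hexpE : 1 ≤ Real.exp (c (j + n)) * E :=
      one_le_mul_of_one_le_of_one_le (Real.one_le_exp (hc _)) hE
    rw [show n + (j + 1) = j + n + 1 by omega]
    calc s (j + n + 1) ≤ (1 + c (j + n)) * s (j + n) + e (j + n) := hrec _ (by omega)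
      _ ≤ (1 + c (j + n)) * (E * A) + e (j + n) := by
        gcongr
        · linarith [hc (j + n)]
        · rw [add_comm j n]; exact ih
      _ ≤ Real.exp (c (j + n)) * (E * A) + Real.exp (c (j + n)) * E * e (j + n) :=
        add_le_add (mul_le_mul_of_nonneg_right hexp (by positivity))
          (le_mul_of_one_le_left (he _) hexpE)
      _ = _ := by
        rw [Finset.sum_range_succ, Finset.sum_range_succ, Real.exp_add]
        ring

theorem le_exp_tsum_mul_of_le_one_add_mul_add (hc : ∀ n, 0 ≤ c n) (he : ∀ n, 0 ≤ e n)
    (hcs : Summable c) (hes : Summable e)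
    (hrec : ∀ n ≥ a, s (n + 1) ≤ (1 + c n) * s n + e n) {n m : ℕ} (hn : a ≤ n) (hsn : 0 ≤ s n)
    (hm : n ≤ m) :
    s m ≤ Real.exp (∑' k, c k) * (s n + ∑' k, e (k + n)) := by
  obtain ⟨j, rfl⟩ := Nat.exists_eq_add_of_le hm
  have hcj : ∑ k ∈ Finset.range j, c (k + n) ≤ ∑' k, c k := by
    rw [← hcs.sum_add_tsum_nat_add n]
    have := ((summable_nat_add_iff n).2 hcs).sum_le_tsum (Finset.range j) fun k _ => hc _
    linarith [Finset.sum_nonneg fun k (_ : k ∈ Finset.range n) => hc k]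
  have hej : ∑ k ∈ Finset.range j, e (k + n) ≤ ∑' k, e (k + n) :=
    ((summable_nat_add_iff n).2 hes).sum_le_tsum _ fun k _ => he _
  refine (le_exp_sum_mul_of_le_one_add_mul_add hc he hrec hn hsn j).trans ?_
  gcongr
  exact add_nonneg hsn (Finset.sum_nonneg fun k _ => he _)

theorem tendsto_zero_of_liminf_eq_zero_of_le_one_add_mul_add (hs : ∀ n, 0 ≤ s n)
    (hc : ∀ n, 0 ≤ c n) (he : ∀ n, 0 ≤ e n) (hcs : Summable c) (hes : Summable e)
    (hrec : ∀ n ≥ a, s (n + 1) ≤ (1 + c n) * s n + e n) (hlim : liminf s atTop = 0) :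
    Tendsto s atTop (𝓝 0) := by
  set C := Real.exp (∑' k, c k)
  have bound : ∀ n ≥ a, ∀ m ≥ n, s m ≤ C * (s n + ∑' k, e (k + n)) := fun n hn m hm =>
    le_exp_tsum_mul_of_le_one_add_mul_add hc he hcs hes hrec hn (hs n) hm
  have hcobdd : IsCoboundedUnder (· ≥ ·) atTop s :=
    isCoboundedUnder_ge_of_eventually_le atTop (eventually_atTop.2 ⟨a, bound a le_rfl⟩)
  refine tendsto_order.2 ⟨fun b hb => .of_forall fun n => hb.trans_le (hs n), fun ε hε => ?_⟩
  set δ := ε / (2 * C)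
  have hδ : 0 < δ := by positivity
  obtain ⟨n, hsn, htail, hn⟩ := (frequently_lt_of_liminf_lt hcobdd (hlim ▸ hδ)).and_eventually
    (((tendsto_sum_nat_add e).eventually (gt_mem_nhds hδ)).and (eventually_ge_atTop a)) |>.exists
  refine eventually_atTop.2 ⟨n, fun m hm => ?_⟩
  calc s m ≤ C * (s n + ∑' k, e (k + n)) := bound n hn m hm
    _ < C * (δ + δ) := by gcongr
    _ = ε := by
      have hC : C ≠ 0 := (Real.exp_pos _).ne'
      simp only [δ]
      field_simp
      ring

end AlmostDecreasing

theorem Summable.mul_of_le_const {ι : Type*} {u v : ι → ℝ} {B : ℝ} (hv : Summable v)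
    (hv0 : ∀ n, 0 ≤ v n) (hu0 : ∀ n, 0 ≤ u n) (hu : ∀ n, u n ≤ B) :
    Summable fun n => u n * v n :=
  (hv.mul_left B).of_nonneg_of_le (fun n => mul_nonneg (hu0 n) (hv0 n))
    fun n => mul_le_mul_of_nonneg_right (hu n) (hv0 n)

theorem le_mul_infDist_add {X : Type*} [PseudoMetricSpace X] {F : Set X} (hF : F.Nonempty)
    {x : X} {r k b : ℝ} (hk : 0 < k) (h : ∀ p ∈ F, r ≤ k * dist x p + b) :
    r ≤ k * infDist x F + b := by
  have : (r - b) / k ≤ infDist x F :=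
    (le_infDist hF).2 fun p hp => by rw [div_le_iff₀' hk]; linarith [h p hp]
  rw [div_le_iff₀' hk] at this
  linarith

theorem exists_tendsto_mem_iff_liminf_infDist_eq_zero {X : Type*} [PseudoMetricSpace X]
    [CompleteSpace X] {F : Set X} (hF : IsClosed F) (hFne : F.Nonempty) {x : ℕ → X}
    {c e : ℕ → ℝ} {a : ℕ} (hc : ∀ n, 0 ≤ c n) (he : ∀ n, 0 ≤ e n) (hcs : Summable c)
    (hes : Summable e)
    (hrec : ∀ p ∈ F, ∀ n ≥ a, dist (x (n + 1)) p ≤ (1 + c n) * dist (x n) p + e n) :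
    (∃ q ∈ F, Tendsto x atTop (𝓝 q)) ↔ liminf (fun n => infDist (x n) F) atTop = 0 := by
  refine ⟨fun ⟨q, hq, hxq⟩ => ?_, fun hlim => ?_⟩
  · exact (squeeze_zero (fun n => infDist_nonneg) (fun n => infDist_le_dist_of_mem hq)
      (tendsto_iff_dist_tendsto_zero.1 hxq)).liminf_eq
  have hd : Tendsto (fun n => infDist (x n) F) atTop (𝓝 0) :=
    tendsto_zero_of_liminf_eq_zero_of_le_one_add_mul_add (fun n => infDist_nonneg) hc he hcs hes
      (fun n hn => le_mul_infDist_add hFne (by linarith [hc n]) fun p hp =>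
        (infDist_le_dist_of_mem hp).trans (hrec p hp n hn)) hlim
  set C := Real.exp (∑' k, c k)
  have hdist : ∀ n ≥ a, ∀ m ≥ n,
      dist (x m) (x n) ≤ (C + 1) * infDist (x n) F + C * ∑' k, e (k + n) :=
    fun n hn m hm => le_mul_infDist_add hFne (by positivity) fun p hp => calc
      dist (x m) (x n) ≤ dist (x m) p + dist (x n) p := dist_triangle_right _ _ _
      _ ≤ C * (dist (x n) p + ∑' k, e (k + n)) + dist (x n) p := by
        gcongr
        exact le_exp_tsum_mul_of_le_one_add_mul_add (s := fun k => dist (x k) p) hc he hcs hes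
          (hrec p hp) hn dist_nonneg hm
      _ = (C + 1) * dist (x n) p + C * ∑' k, e (k + n) := by ring
  have hb : Tendsto (fun n => (C + 1) * infDist (x n) F + C * ∑' k, e (k + n)) atTop (𝓝 0) := by
    simpa using (hd.const_mul (C + 1)).add ((tendsto_sum_nat_add e).const_mul C)
  have hcauchy : CauchySeq x := Metric.cauchySeq_iff'.2 fun ε hε => by
    obtain ⟨N, hN, hNa⟩ := ((hb.eventually (gt_mem_nhds hε)).and (eventually_ge_atTop a)).exists
    exact ⟨N, fun m hm => (hdist N hNa m hm).trans_lt hN⟩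
  obtain ⟨q, hq⟩ := cauchySeq_tendsto_of_complete hcauchy
  have hqF : infDist q F = 0 :=
    tendsto_nhds_unique (((continuous_infDist_pt F).tendsto q).comp hq) hd
  exact ⟨q, (hF.mem_iff_infDist_zero hFne).2 hqF, hq⟩

theorem IsClosed.setOf_mem_and_eq_self_and_eq_self {X : Type*} [TopologicalSpace X]
    [T2Space X] {K : Set X} {f g : X → X} (hK : IsClosed K) (hf : ContinuousOn f K)
    (hg : ContinuousOn g K) : IsClosed {x ∈ K | f x = x ∧ g x = x} :=
  ((hf.prodMk continuousOn_id).prodMk (hg.prodMk continuousOn_id)).preimage_isClosed_of_isClosed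
    hK (isClosed_diagonal.prod isClosed_diagonal)

theorem iterate_mem_of_forall_mem {α : Type*} {f : α → α} {K : Set α} (hf : ∀ x, f x ∈ K)
    {n : ℕ} (hn : 1 ≤ n) (z : α) : f^[n] z ∈ K := by
  obtain ⟨m, rfl⟩ := Nat.exists_eq_add_of_le' hn
  rw [Function.iterate_succ_apply']
  exact hf _

theorem le_add_mul_of_monotoneOn {φ : ℝ → ℝ} {M M' : ℝ} (hφ : MonotoneOn φ (Set.Ici 0))
    (hφ0 : φ 0 = 0) (hM : 0 ≤ M) (hM' : 0 ≤ M') (hgrowth : ∀ κ ≥ M, φ κ ≤ M' * κ) {t : ℝ}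
    (ht : 0 ≤ t) : φ t ≤ φ M + M' * t := by
  rcases le_total t M with htM | hMt
  · nlinarith [hφ (Set.mem_Ici.2 ht) (Set.mem_Ici.2 hM) htM]
  · have hφM : 0 ≤ φ M := hφ0 ▸ hφ (Set.mem_Ici.2 le_rfl) (Set.mem_Ici.2 hM) hM
    linarith [hgrowth t hMt]

theorem norm_sub_le_of_map_eq_self {E : Type*} [SeminormedAddCommGroup E] {G : E → E}
    {z p : E} {φ : ℝ → ℝ} {μ l A B : ℝ} (hp : G p = p)
    (hG : ‖G z - G p‖ ≤ ‖z - p‖ + μ * φ ‖z - p‖ + l) (hμ : 0 ≤ μ) (hφ : φ ‖z - p‖ ≤ A + B * ‖z - p‖) :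
    ‖G z - p‖ ≤ (1 + B * μ) * ‖z - p‖ + (A * μ + l) := by
  rw [hp] at hG
  nlinarith [mul_le_mul_of_nonneg_left hφ hμ]

section Normed

variable {E : Type*} [SeminormedAddCommGroup E] [NormedSpace ℝ E]

theorem norm_smul_add_smul_sub_le {u v p : E} {t r : ℝ} (ht : t ∈ Set.Icc (0 : ℝ) 1)
    (hu : ‖u - p‖ ≤ r) (hv : ‖v - p‖ ≤ r) : ‖(1 - t) • u + t • v - p‖ ≤ r :=
  mem_closedBall_iff_norm.1 <| convex_closedBall p r (mem_closedBall_iff_norm.2 hu)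
    (mem_closedBall_iff_norm.2 hv) (sub_nonneg.2 ht.2) ht.1 (sub_add_cancel 1 t)

theorem norm_ishikawa_sub_le {K : Set E} (hK : Convex ℝ K) {G₁ G₂ : E → E}
    (hG₁K : ∀ z, G₁ z ∈ K) {p x y : E} {a b c e : ℝ} (hx : x ∈ K)
    (hy : y = (1 - b) • x + b • G₁ x) (ha : a ∈ Set.Icc (0 : ℝ) 1) (hb : b ∈ Set.Icc (0 : ℝ) 1)
    (hc : 0 ≤ c) (he : 0 ≤ e) (hG₁ : ∀ z ∈ K, ‖G₁ z - p‖ ≤ (1 + c) * ‖z - p‖ + e)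
    (hG₂ : ∀ z ∈ K, ‖G₂ z - p‖ ≤ (1 + c) * ‖z - p‖ + e) :
    ‖(1 - a) • G₁ y + a • G₂ y - p‖ ≤ (1 + (2 + c) * c) * ‖x - p‖ + (2 + c) * e := by
  subst hy
  have hyK : (1 - b) • x + b • G₁ x ∈ K :=
    hK hx (hG₁K x) (sub_nonneg.2 hb.2) hb.1 (sub_add_cancel 1 b)
  have hxp : ‖x - p‖ ≤ (1 + c) * ‖x - p‖ + e := by nlinarith [norm_nonneg (x - p)]
  calc ‖(1 - a) • G₁ _ + a • G₂ _ - p‖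
      ≤ (1 + c) * ‖(1 - b) • x + b • G₁ x - p‖ + e :=
        norm_smul_add_smul_sub_le ha (hG₁ _ hyK) (hG₂ _ hyK)
    _ ≤ (1 + c) * ((1 + c) * ‖x - p‖ + e) + e := by
        gcongr
        exact norm_smul_add_smul_sub_le hb hxp (hG₁ x hx)
    _ = (1 + (2 + c) * c) * ‖x - p‖ + (2 + c) * e := by ring

end Normed

theorem stmt_11_general {E : Type*} [NormedAddCommGroup E] [NormedSpace ℝ E] [CompleteSpace E]
    (K : Set E) (hKclosed : IsClosed K) (hKconvex : Convex ℝ K)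
    (P T₁ T₂ : E → E)
    (hPrange : ∀ x, P x ∈ K)
    (hPretr : ∀ x ∈ K, P x = x)
    (hT₁cont : ContinuousOn T₁ K) (hT₂cont : ContinuousOn T₂ K)
    (μ lam : ℕ → ℝ)
    (hμ : ∀ n, 0 ≤ μ n) (hlam : ∀ n, 0 ≤ lam n)
    (hμs : Summable μ) (hlams : Summable lam)
    (φ : ℝ → ℝ) (hφmono : StrictMonoOn φ (Set.Ici (0 : ℝ)))
    (hφ0 : φ 0 = 0)
    (M Mstar : ℝ) (hM : 0 < M) (hMstar : 0 < Mstar)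
    (hgrowth : ∀ κ ≥ M, φ κ ≤ Mstar * κ)
    (hT₁ : ∀ x ∈ K, ∀ y ∈ K, ∀ n ≥ 1,
      ‖(P ∘ T₁)^[n] x - (P ∘ T₁)^[n] y‖ ≤ ‖x - y‖ + μ n * φ ‖x - y‖ + lam n)
    (hT₂ : ∀ x ∈ K, ∀ y ∈ K, ∀ n ≥ 1,
      ‖(P ∘ T₂)^[n] x - (P ∘ T₂)^[n] y‖ ≤ ‖x - y‖ + μ n * φ ‖x - y‖ + lam n)
    (F : Set E) (hF : F = {x ∈ K | T₁ x = x ∧ T₂ x = x}) (hFne : F.Nonempty)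
    (α β : ℕ → ℝ) (hα : ∀ n, α n ∈ Set.Icc (0 : ℝ) 1) (hβ : ∀ n, β n ∈ Set.Icc (0 : ℝ) 1)
    (x y : ℕ → E) (hxK : ∀ n, x n ∈ K)
    (hy : ∀ n ≥ 1, y n = (1 - β n) • x n + β n • (P ∘ T₁)^[n] (x n))
    (hx : ∀ n ≥ 1, x (n + 1) = (1 - α n) • (P ∘ T₁)^[n] (y n) + α n • (P ∘ T₂)^[n] (y n)) :
    (∃ q ∈ F, Filter.Tendsto x Filter.atTop (nhds q)) ↔
      Filter.liminf (fun n => Metric.infDist (x n) F) Filter.atTop = 0 := by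
  have hFK : ∀ p ∈ F, p ∈ K ∧ T₁ p = p ∧ T₂ p = p := by rw [hF]; exact fun p hp => hp
  have hFclosed : IsClosed F := hF ▸ hKclosed.setOf_mem_and_eq_self_and_eq_self hT₁cont hT₂cont
  have hφbound : ∀ t ≥ 0, φ t ≤ φ M + Mstar * t := fun t ht =>
    le_add_mul_of_monotoneOn hφmono.monotoneOn hφ0 hM.le hMstar.le hgrowth ht
  have hiter_le : ∀ T : E → E, (∀ x ∈ K, ∀ y ∈ K, ∀ n ≥ 1,
      ‖(P ∘ T)^[n] x - (P ∘ T)^[n] y‖ ≤ ‖x - y‖ + μ n * φ ‖x - y‖ + lam n) →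
      (∀ p ∈ F, T p = p) → ∀ p ∈ F, ∀ n ≥ 1, ∀ z ∈ K,
      ‖(P ∘ T)^[n] z - p‖ ≤ (1 + Mstar * μ n) * ‖z - p‖ + (φ M * μ n + lam n) := by
    intro T hT hTF p hp n hn z hz
    have hfix : (P ∘ T)^[n] p = p :=
      Function.iterate_fixed (by simp [hTF p hp, hPretr p (hFK p hp).1]) n
    exact norm_sub_le_of_map_eq_self hfix (hT z hz p (hFK p hp).1 n hn) (hμ n)
      (hφbound _ (norm_nonneg _))
  have hc₀ : ∀ n, 0 ≤ Mstar * μ n := fun n => mul_nonneg hMstar.le (hμ n)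
  have he₀ : ∀ n, 0 ≤ φ M * μ n + lam n := fun n =>
    add_nonneg (mul_nonneg (by simpa [hφ0] using hφbound 0 le_rfl) (hμ n)) (hlam n)
  have hfactor : ∀ n, 2 + Mstar * μ n ≤ 2 + Mstar * ∑' k, μ k := fun n => by
    gcongr
    exact hμs.le_tsum n fun k _ => hμ k
  have hfactor₀ : ∀ n, 0 ≤ 2 + Mstar * μ n := fun n => by linarith [hc₀ n]
  refine exists_tendsto_mem_iff_liminf_infDist_eq_zero hFclosed hFne (a := 1)
    (fun n => mul_nonneg (hfactor₀ n) (hc₀ n)) (fun n => mul_nonneg (hfactor₀ n) (he₀ n))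
    ((hμs.mul_left Mstar).mul_of_le_const hc₀ hfactor₀ hfactor)
    (((hμs.mul_left (φ M)).add hlams).mul_of_le_const he₀ hfactor₀ hfactor) fun p hp n hn => ?_
  rw [dist_eq_norm, dist_eq_norm, hx n hn]
  exact norm_ishikawa_sub_le hKconvex (iterate_mem_of_forall_mem (fun z => hPrange (T₁ z)) hn)
    (hxK n) (hy n hn) (hα n) (hβ n) (hc₀ n) (he₀ n)
    (hiter_le T₁ hT₁ (fun p hp => (hFK p hp).2.1) p hp n hn)
    (hiter_le T₂ hT₂ (fun p hp => (hFK p hp).2.2) p hp n hn)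

theorem stmt_11 {E : Type*} [NormedAddCommGroup E] [NormedSpace ℝ E] [CompleteSpace E]
    (K : Set E) (hKne : K.Nonempty) (hKclosed : IsClosed K) (hKconvex : Convex ℝ K)
    (P T₁ T₂ : E → E)
    (hPrange : ∀ x, P x ∈ K)
    (hPnonexp : ∀ x y, ‖P x - P y‖ ≤ ‖x - y‖)
    (hPretr : ∀ x ∈ K, P x = x)
    (hT₁cont : ContinuousOn T₁ K) (hT₂cont : ContinuousOn T₂ K)
    (μ lam : ℕ → ℝ)
    (hμ : ∀ n, 0 ≤ μ n) (hlam : ∀ n, 0 ≤ lam n)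
    (hμs : Summable μ) (hlams : Summable lam)
    (φ : ℝ → ℝ) (hφmono : StrictMonoOn φ (Set.Ici (0 : ℝ)))
    (hφcont : ContinuousOn φ (Set.Ici (0 : ℝ))) (hφ0 : φ 0 = 0)
    (M Mstar : ℝ) (hM : 0 < M) (hMstar : 0 < Mstar)
    (hgrowth : ∀ κ ≥ M, φ κ ≤ Mstar * κ)
    (hT₁ : ∀ x ∈ K, ∀ y ∈ K, ∀ n ≥ 1,
      ‖(P ∘ T₁)^[n] x - (P ∘ T₁)^[n] y‖ ≤ ‖x - y‖ + μ n * φ ‖x - y‖ + lam n)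
    (hT₂ : ∀ x ∈ K, ∀ y ∈ K, ∀ n ≥ 1,
      ‖(P ∘ T₂)^[n] x - (P ∘ T₂)^[n] y‖ ≤ ‖x - y‖ + μ n * φ ‖x - y‖ + lam n)
    (F : Set E) (hF : F = {x ∈ K | T₁ x = x ∧ T₂ x = x}) (hFne : F.Nonempty)
    (α β : ℕ → ℝ) (hα : ∀ n, α n ∈ Set.Icc (0 : ℝ) 1) (hβ : ∀ n, β n ∈ Set.Icc (0 : ℝ) 1)
    (x y : ℕ → E) (hxK : ∀ n, x n ∈ K)
    (hy : ∀ n ≥ 1, y n = (1 - β n) • x n + β n • (P ∘ T₁)^[n] (x n))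
    (hx : ∀ n ≥ 1, x (n + 1) = (1 - α n) • (P ∘ T₁)^[n] (y n) + α n • (P ∘ T₂)^[n] (y n)) :
    (∃ q ∈ F, Filter.Tendsto x Filter.atTop (nhds q)) ↔
      Filter.liminf (fun n => Metric.infDist (x n) F) Filter.atTop = 0 :=
  stmt_11_general K hKclosed hKconvex P T₁ T₂ hPrange hPretr hT₁cont hT₂cont μ lam hμ hlam hμs hlams
    φ hφmono hφ0 M Mstar hM hMstar hgrowth hT₁ hT₂ F hF hFne α β hα hβ x y hxK hy hx
end

section
/- Under the hypotheses of Lemma: E uniformly convex Banach space, K closed convex nonexpansive retract with retraction P, T₁, T₂ : K → E uniformly L-Lipschitzian nonself total asymptotically nonexpansive with ∑μ_n < ∞, ∑λ_n < ∞, φ(κ) ≤ M*κ, F ≠ ∅, and α_n, β_n ∈ [ε, 1−ε] for some ε ∈ (0,1). Then the iterates x_n defined by x_{n+1} = (1−α_n)(PT₁)^n y_n + α_n(PT₂)^n y_n, y_n = (1−β_n)x_n + β_n(PT₁)^n x_n satisfy lim‖x_n − (PT₁)^n x_n‖ = 0. -/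
open Filter

private lemma tendsto_of_recur (a c d : ℕ → ℝ) (ha : ∀ n, 0 ≤ a n)
    (hc : ∀ n, 0 ≤ c n) (hd : ∀ n, 0 ≤ d n)
    (hcs : Summable c) (hds : Summable d)
    (hrec : ∀ n ≥ 1, a (n + 1) ≤ (1 + c n) * a n + d n) :
    ∃ r, 0 ≤ r ∧ Tendsto a atTop (nhds r) := by
  set B : ℝ := (a 1 + ∑' n, d n) * Real.exp (∑' n, c n) with hB
  have htd : 0 ≤ ∑' n, d n := tsum_nonneg hd
  have htc : 0 ≤ ∑' n, c n := tsum_nonneg hc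
  have hB0 : 0 ≤ B := mul_nonneg (add_nonneg (ha 1) htd) (Real.exp_pos _).le
  -- boundedness
  have haux : ∀ m : ℕ, a (m + 1) ≤ (a 1 + ∑ k ∈ Finset.range (m + 1), d k) *
      Real.exp (∑ k ∈ Finset.range (m + 1), c k) := by
    intro m
    induction m with
    | zero =>
      have h1 : (1:ℝ) ≤ Real.exp (∑ k ∈ Finset.range 1, c k) :=
        Real.one_le_exp (Finset.sum_nonneg fun k _ => hc k)
      have h2 : 0 ≤ ∑ k ∈ Finset.range 1, d k := Finset.sum_nonneg fun k _ => hd k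
      nlinarith [ha 1]
    | succ m ih =>
      have h0 := hrec (m + 1) (by omega)
      have h1 : 1 + c (m + 1) ≤ Real.exp (c (m + 1)) := by
        have := Real.add_one_le_exp (c (m + 1)); linarith
      have h2 : (0:ℝ) < Real.exp (∑ k ∈ Finset.range (m + 1), c k) := Real.exp_pos _
      have h3 : (0:ℝ) < Real.exp (c (m + 1)) := Real.exp_pos _
      have h4 : (1:ℝ) ≤ Real.exp (∑ k ∈ Finset.range (m + 2), c k) :=
        Real.one_le_exp (Finset.sum_nonneg fun k _ => hc k)
      have h5 : 0 ≤ ∑ k ∈ Finset.range (m + 1), d k := Finset.sum_nonneg fun k _ => hd k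
      have e1 : Real.exp (∑ k ∈ Finset.range (m + 2), c k)
          = Real.exp (∑ k ∈ Finset.range (m + 1), c k) * Real.exp (c (m + 1)) := by
        rw [Finset.sum_range_succ, Real.exp_add]
      have e2 : ∑ k ∈ Finset.range (m + 2), d k
          = ∑ k ∈ Finset.range (m + 1), d k + d (m + 1) := Finset.sum_range_succ _ _
      have key : a (m + 2) ≤ (1 + c (m + 1)) * a (m + 1) + d (m + 1) := h0
      have hnn : 0 ≤ a (m + 1) := ha _
      have hc1 : 0 ≤ 1 + c (m + 1) := by linarith [hc (m + 1)]
      calc a (m + 2) ≤ (1 + c (m + 1)) * a (m + 1) + d (m + 1) := key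
        _ ≤ Real.exp (c (m + 1)) * ((a 1 + ∑ k ∈ Finset.range (m + 1), d k) *
              Real.exp (∑ k ∈ Finset.range (m + 1), c k)) + d (m + 1) := by
            have := mul_le_mul_of_nonneg_right h1 hnn
            have := mul_le_mul_of_nonneg_left ih h3.le
            nlinarith
        _ = (a 1 + ∑ k ∈ Finset.range (m + 1), d k) *
              Real.exp (∑ k ∈ Finset.range (m + 2), c k) + d (m + 1) := by rw [e1]; ring
        _ ≤ (a 1 + ∑ k ∈ Finset.range (m + 2), d k) *
              Real.exp (∑ k ∈ Finset.range (m + 2), c k) := by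
            rw [e2]
            nlinarith [hd (m + 1)]
  have hbound : ∀ n ≥ 1, a n ≤ B := by
    intro n hn
    obtain ⟨m, rfl⟩ : ∃ m, n = m + 1 := ⟨n - 1, by omega⟩
    refine (haux m).trans ?_
    have h1 : ∑ k ∈ Finset.range (m + 1), d k ≤ ∑' n, d n :=
      Summable.sum_le_tsum _ (fun k _ => hd k) hds
    have h2 : ∑ k ∈ Finset.range (m + 1), c k ≤ ∑' n, c n :=
      Summable.sum_le_tsum _ (fun k _ => hc k) hcs
    have h3 : Real.exp (∑ k ∈ Finset.range (m + 1), c k) ≤ Real.exp (∑' n, c n) :=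
      Real.exp_le_exp.2 h2
    have h4 : (0:ℝ) < Real.exp (∑ k ∈ Finset.range (m + 1), c k) := Real.exp_pos _
    have h5 : 0 ≤ ∑ k ∈ Finset.range (m + 1), d k := Finset.sum_nonneg fun k _ => hd k
    rw [hB]
    nlinarith [ha 1]
  -- step inequality with summable increments
  set e : ℕ → ℝ := fun n => c n * B + d n with he
  have he0 : ∀ n, 0 ≤ e n := fun n => add_nonneg (mul_nonneg (hc n) hB0) (hd n)
  have hes : Summable e := (hcs.mul_right B).add hds
  have hstep : ∀ n ≥ 1, a (n + 1) ≤ a n + e n := by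
    intro n hn
    have h0 := hrec n hn
    have h1 := hbound n hn
    have h2 := hc n
    simp only [he]
    nlinarith
  set t : ℕ → ℝ := fun n => ∑' k, e (k + n) with htdef
  have htt : ∀ n, t n = (∑' k, e k) - ∑ k ∈ Finset.range n, e k := by
    intro n
    have := Summable.sum_add_tsum_nat_add n hes
    simp only [htdef]
    linarith
  have ht0 : ∀ n, 0 ≤ t n := fun n => tsum_nonneg fun k => he0 _
  have htlim : Tendsto t atTop (nhds 0) := by
    have h1 : Tendsto (fun n => ∑ k ∈ Finset.range n, e k) atTop (nhds (∑' k, e k)) :=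
      hes.hasSum.tendsto_sum_nat
    have h2 : Tendsto (fun n => (∑' k, e k) - ∑ k ∈ Finset.range n, e k) atTop
        (nhds ((∑' k, e k) - (∑' k, e k))) := tendsto_const_nhds.sub h1
    simp only [sub_self] at h2
    exact h2.congr fun n => (htt n).symm
  have htrec : ∀ n, t n = e n + t (n + 1) := by
    intro n
    rw [htt n, htt (n + 1), Finset.sum_range_succ]
    ring
  set u : ℕ → ℝ := fun n => a (n + 1) + t (n + 1) with hu
  have hanti : Antitone u := by
    refine antitone_nat_of_succ_le fun n => ?_
    simp only [hu]
    have h1 := hstep (n + 1) (by omega)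
    have h2 := htrec (n + 1)
    linarith
  have hub : BddBelow (Set.range u) := by
    refine ⟨0, fun z hz => ?_⟩
    obtain ⟨n, rfl⟩ := hz
    exact add_nonneg (ha _) (ht0 _)
  have hulim : Tendsto u atTop (nhds (⨅ n, u n)) := tendsto_atTop_ciInf hanti hub
  refine ⟨⨅ n, u n, ?_, ?_⟩
  · exact le_ciInf fun n => add_nonneg (ha _) (ht0 _)
  · have h1 : Tendsto (fun n => u n - t (n + 1)) atTop (nhds ((⨅ n, u n) - 0)) :=
      hulim.sub (htlim.comp (tendsto_add_atTop_nat 1))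
    rw [sub_zero] at h1
    have h2 : Tendsto (fun n => a (n + 1)) atTop (nhds (⨅ n, u n)) := by
      refine h1.congr fun n => ?_
      simp only [hu]; ring
    exact (tendsto_add_atTop_iff_nat 1).mp h2

open Filter

private lemma schu_lemma {E : Type*} [NormedAddCommGroup E] [NormedSpace ℝ E]
    [UniformConvexSpace E]
    (ε r : ℝ) (hε : 0 < ε) (hε1 : ε < 1) (hr : 0 ≤ r)
    (t : ℕ → ℝ) (u v : ℕ → E)
    (ht : ∀ n, t n ∈ Set.Icc ε (1 - ε))
    (hu : ∀ η > 0, ∀ᶠ n in atTop, ‖u n‖ ≤ r + η)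
    (hv : ∀ η > 0, ∀ᶠ n in atTop, ‖v n‖ ≤ r + η)
    (hw : Tendsto (fun n => ‖t n • u n + (1 - t n) • v n‖) atTop (nhds r)) :
    Tendsto (fun n => ‖u n - v n‖) atTop (nhds 0) := by
  rcases eq_or_lt_of_le hr with hr0 | hrpos
  · -- r = 0
    have hu0 : Tendsto (fun n => ‖u n‖) atTop (nhds 0) := by
      rw [Metric.tendsto_atTop]
      intro η hη
      obtain ⟨N, hN⟩ := (hu (η / 2) (by linarith)).exists_forall_of_atTop
      exact ⟨N, fun n hn => by
        have := hN n hn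
        rw [Real.dist_eq, sub_zero, abs_of_nonneg (norm_nonneg _)]
        rw [← hr0] at this; linarith⟩
    have hv0 : Tendsto (fun n => ‖v n‖) atTop (nhds 0) := by
      rw [Metric.tendsto_atTop]
      intro η hη
      obtain ⟨N, hN⟩ := (hv (η / 2) (by linarith)).exists_forall_of_atTop
      exact ⟨N, fun n hn => by
        have := hN n hn
        rw [Real.dist_eq, sub_zero, abs_of_nonneg (norm_nonneg _)]
        rw [← hr0] at this; linarith⟩
    have : Tendsto (fun n => ‖u n‖ + ‖v n‖) atTop (nhds 0) := by
      simpa using hu0.add hv0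
    exact squeeze_zero (fun n => norm_nonneg _) (fun n => norm_sub_le _ _) this
  · -- r > 0
    rw [Metric.tendsto_atTop]
    intro c hc
    obtain ⟨δ₀, hδ₀, hconv⟩ :=
      exists_forall_closed_ball_dist_add_le_two_sub E
        (show (0:ℝ) < c / (r + 1) by positivity)
    set δ : ℝ := min δ₀ 1 with hδdef
    have hδ : 0 < δ := lt_min hδ₀ one_pos
    have hδ1 : δ ≤ 1 := min_le_right _ _
    set η : ℝ := min 1 (r * ε * δ / 2) with hηdef
    have hη : 0 < η := lt_min one_pos (by positivity)
    set R : ℝ := r + η with hRdef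
    have hR0 : 0 < R := by positivity
    have hR1 : R ≤ r + 1 := by
      have : η ≤ 1 := min_le_left _ _
      simp only [hRdef]; linarith
    set ρ : ℝ := R * (1 - ε * δ) with hρdef
    have hρ : ρ < r := by
      have h1 : η ≤ r * ε * δ / 2 := min_le_right _ _
      have h2 : r * (ε * δ) ≤ R * (ε * δ) :=
        mul_le_mul_of_nonneg_right (by simp only [hRdef]; linarith) (by positivity)
      have : ρ = R - R * (ε * δ) := by simp only [hρdef]; ring
      rw [this]
      simp only [hRdef]
      nlinarith
    have hev : ∀ᶠ n in atTop,
        ‖u n‖ ≤ R ∧ ‖v n‖ ≤ R ∧ ρ < ‖t n • u n + (1 - t n) • v n‖ := by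
      have h3 : ∀ᶠ n in atTop, ρ < ‖t n • u n + (1 - t n) • v n‖ :=
        hw.eventually (eventually_gt_nhds hρ)
      exact ((hu η hη).and ((hv η hη).and h3)).mono (fun n h => ⟨h.1, h.2.1, h.2.2⟩)
    have key : ∀ m : ℕ, ∀ x y : E, ‖x‖ ≤ 1 → ‖y‖ ≤ 1 → c / (r + 1) ≤ ‖x - y‖ →
        ‖t m • x + (1 - t m) • y‖ ≤ 1 - ε * δ := by
      intro m x y hxn hyn hxy
      have hsum : ‖x + y‖ ≤ 2 - δ := by
        have h := hconv hxn hyn hxy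
        have : δ ≤ δ₀ := min_le_left _ _
        linarith
      obtain ⟨htl, htr⟩ := ht m
      have htnn : 0 ≤ t m := hε.le.trans htl
      have ht1 : t m ≤ 1 := by linarith
      rcases le_total (t m) (1 / 2) with hhalf | hhalf
      · have heq : t m • x + (1 - t m) • y = t m • (x + y) + (1 - 2 * t m) • y := by
          module
        rw [heq]
        calc ‖t m • (x + y) + (1 - 2 * t m) • y‖
            ≤ ‖t m • (x + y)‖ + ‖(1 - 2 * t m) • y‖ := norm_add_le _ _
          _ = t m * ‖x + y‖ + (1 - 2 * t m) * ‖y‖ := by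
              rw [norm_smul, norm_smul, Real.norm_of_nonneg htnn,
                Real.norm_of_nonneg (by linarith : (0:ℝ) ≤ 1 - 2 * t m)]
          _ ≤ 1 - ε * δ := by
              have h2 : t m * ‖x + y‖ ≤ t m * (2 - δ) := mul_le_mul_of_nonneg_left hsum htnn
              have h3 : (1 - 2 * t m) * ‖y‖ ≤ (1 - 2 * t m) * 1 :=
                mul_le_mul_of_nonneg_left hyn (by linarith)
              have h4 : ε * δ ≤ t m * δ := mul_le_mul_of_nonneg_right htl hδ.le
              nlinarith
      · have heq : t m • x + (1 - t m) • y = (2 * t m - 1) • x + (1 - t m) • (x + y) := by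
          module
        rw [heq]
        calc ‖(2 * t m - 1) • x + (1 - t m) • (x + y)‖
            ≤ ‖(2 * t m - 1) • x‖ + ‖(1 - t m) • (x + y)‖ := norm_add_le _ _
          _ = (2 * t m - 1) * ‖x‖ + (1 - t m) * ‖x + y‖ := by
              rw [norm_smul, norm_smul, Real.norm_of_nonneg (by linarith : (0:ℝ) ≤ 2 * t m - 1),
                Real.norm_of_nonneg (by linarith : (0:ℝ) ≤ 1 - t m)]
          _ ≤ 1 - ε * δ := by
              have h2 : (1 - t m) * ‖x + y‖ ≤ (1 - t m) * (2 - δ) :=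
                mul_le_mul_of_nonneg_left hsum (by linarith)
              have h3 : (2 * t m - 1) * ‖x‖ ≤ (2 * t m - 1) * 1 :=
                mul_le_mul_of_nonneg_left hxn (by linarith)
              have h4 : ε * δ ≤ (1 - t m) * δ :=
                mul_le_mul_of_nonneg_right (by linarith : ε ≤ 1 - t m) hδ.le
              nlinarith
    obtain ⟨N, hN⟩ := hev.exists_forall_of_atTop
    refine ⟨N, fun n hn => ?_⟩
    obtain ⟨hun, hvn, hwn⟩ := hN n hn
    rw [Real.dist_eq, sub_zero, abs_of_nonneg (norm_nonneg _)]
    by_contra hcon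
    push_neg at hcon
    have hxn : ‖R⁻¹ • u n‖ ≤ 1 := by
      rw [norm_smul, norm_inv, Real.norm_of_nonneg hR0.le, ← div_eq_inv_mul]
      exact div_le_one_of_le₀ hun hR0.le
    have hyn : ‖R⁻¹ • v n‖ ≤ 1 := by
      rw [norm_smul, norm_inv, Real.norm_of_nonneg hR0.le, ← div_eq_inv_mul]
      exact div_le_one_of_le₀ hvn hR0.le
    have hxy : c / (r + 1) ≤ ‖R⁻¹ • u n - R⁻¹ • v n‖ := by
      rw [← smul_sub, norm_smul, norm_inv, Real.norm_of_nonneg hR0.le, ← div_eq_inv_mul]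
      calc c / (r + 1) ≤ c / R := by gcongr
        _ ≤ ‖u n - v n‖ / R := by gcongr
    have hcomb := key n _ _ hxn hyn hxy
    have hscale : t n • u n + (1 - t n) • v n
        = R • (t n • (R⁻¹ • u n) + (1 - t n) • (R⁻¹ • v n)) := by
      rw [smul_add, smul_comm R (t n), smul_comm R (1 - t n), smul_inv_smul₀ hR0.ne', smul_inv_smul₀ hR0.ne']
    have hfinal : ‖t n • u n + (1 - t n) • v n‖ ≤ ρ := by
      rw [hscale, norm_smul, Real.norm_of_nonneg hR0.le, hρdef]
      exact mul_le_mul_of_nonneg_left hcomb hR0.le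
    linarith

open Filter

theorem stmt_13 {E : Type*} [NormedAddCommGroup E] [NormedSpace ℝ E]
    [UniformConvexSpace E] [CompleteSpace E]
    (K : Set E) (hKne : K.Nonempty) (hKclosed : IsClosed K) (hKconvex : Convex ℝ K)
    (P T₁ T₂ : E → E)
    (hPrange : ∀ x, P x ∈ K)
    (hPnonexp : ∀ x y, ‖P x - P y‖ ≤ ‖x - y‖)
    (hPretr : ∀ x ∈ K, P x = x)
    (L : ℝ) (hL : 0 < L)
    (hLip₁ : ∀ x ∈ K, ∀ y ∈ K, ∀ n ≥ 1, ‖(P ∘ T₁)^[n] x - (P ∘ T₁)^[n] y‖ ≤ L * ‖x - y‖)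
    (hLip₂ : ∀ x ∈ K, ∀ y ∈ K, ∀ n ≥ 1, ‖(P ∘ T₂)^[n] x - (P ∘ T₂)^[n] y‖ ≤ L * ‖x - y‖)
    (μ lam : ℕ → ℝ)
    (hμ : ∀ n, 0 ≤ μ n) (hlam : ∀ n, 0 ≤ lam n)
    (hμs : Summable μ) (hlams : Summable lam)
    (φ : ℝ → ℝ) (hφmono : StrictMonoOn φ (Set.Ici (0 : ℝ)))
    (hφcont : ContinuousOn φ (Set.Ici (0 : ℝ))) (hφ0 : φ 0 = 0)
    (M Mstar : ℝ) (hM : 0 < M) (hMstar : 0 < Mstar)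
    (hgrowth : ∀ κ ≥ M, φ κ ≤ Mstar * κ)
    (hT₁ : ∀ x ∈ K, ∀ y ∈ K, ∀ n ≥ 1,
      ‖(P ∘ T₁)^[n] x - (P ∘ T₁)^[n] y‖ ≤ ‖x - y‖ + μ n * φ ‖x - y‖ + lam n)
    (hT₂ : ∀ x ∈ K, ∀ y ∈ K, ∀ n ≥ 1,
      ‖(P ∘ T₂)^[n] x - (P ∘ T₂)^[n] y‖ ≤ ‖x - y‖ + μ n * φ ‖x - y‖ + lam n)
    (F : Set E) (hF : F = {x ∈ K | T₁ x = x ∧ T₂ x = x}) (hFne : F.Nonempty)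
    (ε : ℝ) (hε : ε ∈ Set.Ioo (0 : ℝ) 1)
    (α β : ℕ → ℝ)
    (hα : ∀ n, α n ∈ Set.Icc ε (1 - ε)) (hβ : ∀ n, β n ∈ Set.Icc ε (1 - ε))
    (x y : ℕ → E) (hxK : ∀ n, x n ∈ K)
    (hy : ∀ n ≥ 1, y n = (1 - β n) • x n + β n • (P ∘ T₁)^[n] (x n))
    (hx : ∀ n ≥ 1, x (n + 1) = (1 - α n) • (P ∘ T₁)^[n] (y n) + α n • (P ∘ T₂)^[n] (y n)) :
    Filter.Tendsto (fun n => ‖x n - (P ∘ T₁)^[n] (x n)‖) Filter.atTop (nhds 0) := by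
  obtain ⟨p, hpF⟩ := hFne
  rw [hF] at hpF
  obtain ⟨hpK, hp1, hp2⟩ := hpF
  obtain ⟨hε0, hε1⟩ := hε
  have hfix₁ : ∀ n, (P ∘ T₁)^[n] p = p := by
    intro n; induction n with
    | zero => simp
    | succ m ih => rw [Function.iterate_succ_apply', ih, Function.comp_apply, hp1, hPretr p hpK]
  have hfix₂ : ∀ n, (P ∘ T₂)^[n] p = p := by
    intro n; induction n with
    | zero => simp
    | succ m ih => rw [Function.iterate_succ_apply', ih, Function.comp_apply, hp2, hPretr p hpK]
  have hSK₁ : ∀ n, 1 ≤ n → ∀ z, (P ∘ T₁)^[n] z ∈ K := by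
    intro n hn z
    obtain ⟨m, rfl⟩ : ∃ m, n = m + 1 := ⟨n - 1, by omega⟩
    rw [Function.iterate_succ_apply']
    exact hPrange _
  have hyK : ∀ n, 1 ≤ n → y n ∈ K := by
    intro n hn
    rw [hy n hn]
    exact hKconvex (hxK n) (hSK₁ n hn (x n)) (by linarith [(hβ n).2]) (by linarith [(hβ n).1])
      (by ring)
  have hφnn : ∀ a, 0 ≤ a → 0 ≤ φ a := by
    intro a ha0
    rcases eq_or_lt_of_le ha0 with h | h
    · rw [← h, hφ0]
    · have := hφmono Set.self_mem_Ici (Set.mem_Ici.2 ha0) h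
      rw [hφ0] at this; exact this.le
  have hφle : ∀ a, 0 ≤ a → φ a ≤ φ M + Mstar * a := by
    intro a ha0
    rcases le_or_gt a M with h | h
    · have h1 : φ a ≤ φ M := hφmono.monotoneOn (Set.mem_Ici.2 ha0) (Set.mem_Ici.2 hM.le) h
      nlinarith [mul_nonneg hMstar.le ha0]
    · have h1 := hgrowth a h.le
      have h2 := hφnn M hM.le
      linarith
  set c : ℕ → ℝ := fun n => Mstar * μ n with hcdef
  set d : ℕ → ℝ := fun n => μ n * φ M + lam n with hddef
  have hc0 : ∀ n, 0 ≤ c n := fun n => mul_nonneg hMstar.le (hμ n)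
  have hd0 : ∀ n, 0 ≤ d n := fun n => add_nonneg (mul_nonneg (hμ n) (hφnn M hM.le)) (hlam n)
  have hcs : Summable c := hμs.mul_left Mstar
  have hds : Summable d := (hμs.mul_right (φ M)).add hlams
  have key : ∀ f : E → E,
      (∀ u ∈ K, ∀ v ∈ K, ∀ n ≥ 1,
        ‖(P ∘ f)^[n] u - (P ∘ f)^[n] v‖ ≤ ‖u - v‖ + μ n * φ ‖u - v‖ + lam n) →
      ∀ n, 1 ≤ n → ∀ u, u ∈ K → ∀ v, v ∈ K →
        ‖(P ∘ f)^[n] u - (P ∘ f)^[n] v‖ ≤ (1 + c n) * ‖u - v‖ + d n := by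
    intro f hf n hn u hu v hv
    have h1 := hf u hu v hv n hn
    have h2 := hφle ‖u - v‖ (norm_nonneg _)
    have h3 := hμ n
    have h4 := norm_nonneg (u - v)
    simp only [hcdef, hddef]
    nlinarith
  have key₁ := key T₁ hT₁
  have key₂ := key T₂ hT₂
  set a : ℕ → ℝ := fun n => ‖x n - p‖ with hadef
  have hb : ∀ n, 1 ≤ n → ‖y n - p‖ ≤ (1 + c n) * a n + d n := by
    intro n hn
    have hdecomp : y n - p = (1 - β n) • (x n - p) + β n • ((P ∘ T₁)^[n] (x n) - p) := by
      rw [hy n hn]; module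
    have h1 : ‖y n - p‖ ≤ (1 - β n) * ‖x n - p‖ + β n * ‖(P ∘ T₁)^[n] (x n) - p‖ := by
      rw [hdecomp]
      refine (norm_add_le _ _).trans ?_
      rw [norm_smul, norm_smul, Real.norm_of_nonneg (by linarith [(hβ n).2]),
        Real.norm_of_nonneg (by linarith [(hβ n).1])]
    have h2 : ‖(P ∘ T₁)^[n] (x n) - p‖ ≤ (1 + c n) * ‖x n - p‖ + d n := by
      have h := key₁ n hn (x n) (hxK n) p hpK
      rwa [hfix₁ n] at h
    have hβ1 := (hβ n).1; have hβ2 := (hβ n).2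
    have hcn := hc0 n; have hdn := hd0 n
    have hnn := norm_nonneg (x n - p)
    simp only [hadef]
    nlinarith [mul_le_mul_of_nonneg_left h2 (show (0:ℝ) ≤ β n by linarith),
      mul_nonneg hcn hnn,
      mul_nonneg (mul_nonneg (show (0:ℝ) ≤ 1 - β n by linarith) hcn) hnn,
      mul_le_of_le_one_left hdn (show β n ≤ 1 by linarith)]
  have ha' : ∀ n, 1 ≤ n → a (n + 1) ≤ (1 + c n) * ‖y n - p‖ + d n := by
    intro n hn
    have hdecomp : x (n + 1) - p
        = (1 - α n) • ((P ∘ T₁)^[n] (y n) - p) + α n • ((P ∘ T₂)^[n] (y n) - p) := by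
      rw [hx n hn]; module
    have h1 : ‖x (n + 1) - p‖ ≤ (1 - α n) * ‖(P ∘ T₁)^[n] (y n) - p‖
        + α n * ‖(P ∘ T₂)^[n] (y n) - p‖ := by
      rw [hdecomp]
      refine (norm_add_le _ _).trans ?_
      rw [norm_smul, norm_smul, Real.norm_of_nonneg (by linarith [(hα n).2]),
        Real.norm_of_nonneg (by linarith [(hα n).1])]
    have h2 : ‖(P ∘ T₁)^[n] (y n) - p‖ ≤ (1 + c n) * ‖y n - p‖ + d n := by
      have h := key₁ n hn (y n) (hyK n hn) p hpK
      rwa [hfix₁ n] at h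
    have h3 : ‖(P ∘ T₂)^[n] (y n) - p‖ ≤ (1 + c n) * ‖y n - p‖ + d n := by
      have h := key₂ n hn (y n) (hyK n hn) p hpK
      rwa [hfix₂ n] at h
    have hα1 := (hα n).1; have hα2 := (hα n).2
    simp only [hadef]
    nlinarith
  obtain ⟨C, hC⟩ : ∃ C, ∀ n, c n ≤ C := by
    obtain ⟨C, hC⟩ := hcs.tendsto_atTop_zero.bddAbove_range
    exact ⟨C, fun n => hC (Set.mem_range_self n)⟩
  have hes : Summable (fun n => c n * c n + (c n + c n)) := by
    refine Summable.add ?_ (hcs.add hcs)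
    refine Summable.of_nonneg_of_le (fun n => mul_nonneg (hc0 n) (hc0 n))
      (fun n => mul_le_mul_of_nonneg_right (hC n) (hc0 n)) (hcs.mul_left C)
  have hfs : Summable (fun n => c n * d n + (d n + d n)) := by
    refine Summable.add ?_ (hds.add hds)
    refine Summable.of_nonneg_of_le (fun n => mul_nonneg (hc0 n) (hd0 n))
      (fun n => mul_le_mul_of_nonneg_right (hC n) (hd0 n)) (hds.mul_left C)
  have hrec : ∀ n ≥ 1, a (n + 1)
      ≤ (1 + (c n * c n + (c n + c n))) * a n + (c n * d n + (d n + d n)) := by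
    intro n hn
    have h1 := ha' n hn
    have h2 := hb n hn
    have hcn := hc0 n; have hdn := hd0 n
    have hyn := norm_nonneg (y n - p)
    nlinarith [mul_le_mul_of_nonneg_left h2 (show (0:ℝ) ≤ 1 + c n by linarith)]
  obtain ⟨r, hr0, hra⟩ := tendsto_of_recur a (fun n => c n * c n + (c n + c n))
      (fun n => c n * d n + (d n + d n)) (fun n => norm_nonneg _)
      (fun n => add_nonneg (mul_nonneg (hc0 n) (hc0 n)) (add_nonneg (hc0 n) (hc0 n)))
      (fun n => add_nonneg (mul_nonneg (hc0 n) (hd0 n)) (add_nonneg (hd0 n) (hd0 n)))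
      hes hfs hrec
  -- basic limit facts
  have hc0' : Tendsto c atTop (nhds 0) := hcs.tendsto_atTop_zero
  have hd0' : Tendsto d atTop (nhds 0) := hds.tendsto_atTop_zero
  have hB1 : Tendsto (fun n => (1 + c n) * a n + d n) atTop (nhds r) := by
    have h : Tendsto (fun n => (1 + c n) * a n + d n) atTop (nhds ((1 + 0) * r + 0)) :=
      ((tendsto_const_nhds.add hc0').mul hra).add hd0'
    simpa using h
  have hB2 : Tendsto (fun n => (1 + c n) * ((1 + c n) * a n + d n) + d n) atTop (nhds r) := by
    have h : Tendsto (fun n => (1 + c n) * ((1 + c n) * a n + d n) + d n) atTop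
        (nhds ((1 + 0) * r + 0)) := ((tendsto_const_nhds.add hc0').mul hB1).add hd0'
    simpa using h
  have hshift : Tendsto (fun n => a (n + 1)) atTop (nhds r) :=
    hra.comp (tendsto_add_atTop_nat 1)
  have hevle : ∀ f g : ℕ → ℝ, Tendsto g atTop (nhds r) → (∀ᶠ n in atTop, f n ≤ g n) →
      ∀ η > 0, ∀ᶠ n in atTop, f n ≤ r + η := by
    intro f g hg hfg η hη
    have h1 : ∀ᶠ n in atTop, g n < r + η := hg.eventually (eventually_lt_nhds (by linarith))
    filter_upwards [h1, hfg] with n ha hb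
    linarith
  -- Schu application 1
  have ht1 : ∀ n, 1 - α n ∈ Set.Icc ε (1 - ε) := fun n =>
    ⟨by linarith [(hα n).2], by linarith [(hα n).1]⟩
  have hu1 : ∀ η > 0, ∀ᶠ n in atTop, ‖(P ∘ T₁)^[n] (y n) - p‖ ≤ r + η := by
    refine hevle _ _ hB2 ?_
    filter_upwards [eventually_ge_atTop 1] with n hn
    have h2 := key₁ n hn (y n) (hyK n hn) p hpK
    rw [hfix₁ n] at h2
    have h3 := hb n hn
    have hc1 : (0:ℝ) ≤ 1 + c n := by linarith [hc0 n]
    calc ‖(P ∘ T₁)^[n] (y n) - p‖ ≤ (1 + c n) * ‖y n - p‖ + d n := h2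
      _ ≤ (1 + c n) * ((1 + c n) * a n + d n) + d n := by
          have := mul_le_mul_of_nonneg_left h3 hc1
          linarith
  have hv1 : ∀ η > 0, ∀ᶠ n in atTop, ‖(P ∘ T₂)^[n] (y n) - p‖ ≤ r + η := by
    refine hevle _ _ hB2 ?_
    filter_upwards [eventually_ge_atTop 1] with n hn
    have h2 := key₂ n hn (y n) (hyK n hn) p hpK
    rw [hfix₂ n] at h2
    have h3 := hb n hn
    have hc1 : (0:ℝ) ≤ 1 + c n := by linarith [hc0 n]
    calc ‖(P ∘ T₂)^[n] (y n) - p‖ ≤ (1 + c n) * ‖y n - p‖ + d n := h2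
      _ ≤ (1 + c n) * ((1 + c n) * a n + d n) + d n := by
          have := mul_le_mul_of_nonneg_left h3 hc1
          linarith
  have hw1 : Tendsto (fun n => ‖(1 - α n) • ((P ∘ T₁)^[n] (y n) - p)
      + (1 - (1 - α n)) • ((P ∘ T₂)^[n] (y n) - p)‖) atTop (nhds r) := by
    refine Filter.Tendsto.congr' ?_ hshift
    filter_upwards [eventually_ge_atTop 1] with n hn
    show ‖x (n + 1) - p‖ = _
    rw [hx n hn]
    congr 1
    module
  have hS12 := schu_lemma ε r hε0 hε1 hr0 (fun n => 1 - α n)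
    (fun n => (P ∘ T₁)^[n] (y n) - p) (fun n => (P ∘ T₂)^[n] (y n) - p) ht1 hu1 hv1 hw1
  have hS12' : Tendsto (fun n => ‖(P ∘ T₁)^[n] (y n) - (P ∘ T₂)^[n] (y n)‖) atTop (nhds 0) :=
    hS12.congr fun n => by rw [sub_sub_sub_cancel_right]
  have hg0 : Tendsto (fun n => ‖x (n + 1) - (P ∘ T₁)^[n] (y n)‖) atTop (nhds 0) := by
    refine squeeze_zero' (Eventually.of_forall fun n => norm_nonneg _) ?_ hS12'
    filter_upwards [eventually_ge_atTop 1] with n hn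
    have heq : x (n + 1) - (P ∘ T₁)^[n] (y n)
        = α n • ((P ∘ T₂)^[n] (y n) - (P ∘ T₁)^[n] (y n)) := by
      rw [hx n hn]; module
    rw [heq, norm_smul, Real.norm_of_nonneg (by linarith [(hα n).1]), norm_sub_rev]
    have h1 := norm_nonneg ((P ∘ T₁)^[n] (y n) - (P ∘ T₂)^[n] (y n))
    nlinarith [(hα n).2]
  have hLB : Tendsto (fun n =>
      (a (n + 1) - d n - ‖x (n + 1) - (P ∘ T₁)^[n] (y n)‖) / (1 + c n)) atTop (nhds r) := by
    have h : Tendsto (fun n =>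
        (a (n + 1) - d n - ‖x (n + 1) - (P ∘ T₁)^[n] (y n)‖) / (1 + c n)) atTop
        (nhds ((r - 0 - 0) / (1 + 0))) :=
      ((hshift.sub hd0').sub hg0).div (tendsto_const_nhds.add hc0') (by norm_num)
    simpa using h
  have hyp : Tendsto (fun n => ‖y n - p‖) atTop (nhds r) := by
    refine tendsto_of_tendsto_of_tendsto_of_le_of_le' hLB hB1 ?_ ?_
    · filter_upwards [eventually_ge_atTop 1] with n hn
      have h2 := key₁ n hn (y n) (hyK n hn) p hpK
      rw [hfix₁ n] at h2
      have htri : a (n + 1) ≤ ‖x (n + 1) - (P ∘ T₁)^[n] (y n)‖ + ‖(P ∘ T₁)^[n] (y n) - p‖ := by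
        show ‖x (n + 1) - p‖ ≤ _
        calc ‖x (n + 1) - p‖
            = ‖(x (n + 1) - (P ∘ T₁)^[n] (y n)) + ((P ∘ T₁)^[n] (y n) - p)‖ := by
              rw [sub_add_sub_cancel]
          _ ≤ _ := norm_add_le _ _
      have hc1 : (0:ℝ) < 1 + c n := by linarith [hc0 n]
      rw [div_le_iff₀ hc1]
      nlinarith
    · filter_upwards [eventually_ge_atTop 1] with n hn
      exact hb n hn
  -- Schu application 2
  have ht2 : ∀ n, 1 - β n ∈ Set.Icc ε (1 - ε) := fun n =>
    ⟨by linarith [(hβ n).2], by linarith [(hβ n).1]⟩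
  have hu2 : ∀ η > 0, ∀ᶠ n in atTop, ‖x n - p‖ ≤ r + η :=
    hevle _ _ hra (Eventually.of_forall fun n => le_refl _)
  have hv2 : ∀ η > 0, ∀ᶠ n in atTop, ‖(P ∘ T₁)^[n] (x n) - p‖ ≤ r + η := by
    refine hevle _ _ hB1 ?_
    filter_upwards [eventually_ge_atTop 1] with n hn
    have h2 := key₁ n hn (x n) (hxK n) p hpK
    rwa [hfix₁ n] at h2
  have hw2 : Tendsto (fun n => ‖(1 - β n) • (x n - p)
      + (1 - (1 - β n)) • ((P ∘ T₁)^[n] (x n) - p)‖) atTop (nhds r) := by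
    refine Filter.Tendsto.congr' ?_ hyp
    filter_upwards [eventually_ge_atTop 1] with n hn
    rw [hy n hn]
    congr 1
    module
  have hfin := schu_lemma ε r hε0 hε1 hr0 (fun n => 1 - β n)
    (fun n => x n - p) (fun n => (P ∘ T₁)^[n] (x n) - p) ht2 hu2 hv2 hw2
  exact hfin.congr fun n => by rw [sub_sub_sub_cancel_right]
end
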